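/- arXiv:2112.11041 — 4 statements merged into one kernel-verified Lean document; each statement's English description precedes it below -/
import Mathlib

section
/- If the column spaces of matrices A and B are orthogonal (i.e., every column of A is orthogonal to every column of B, equivalently AᵀB = 0), then the nuclear norm of the concatenation equals the sum of nuclear norms: ‖[A, B]‖_* = ‖A‖_* + ‖B‖_*. -/
open Matrix

noncomputable def singularValues {d : ℕ} {n : Type*} [Fintype n]
    (M : Matrix (Fin d) n ℝ) : Fin d → ℝ :=
  fun i => Real.sqrt ((Matrix.isHermitian_mul_conjTranspose_self M).eigenvalues i)

noncomputable def nuclearNorm {d : ℕ} {n : Type*} [Fintype n]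
    (M : Matrix (Fin d) n ℝ) : ℝ :=
  ∑ i, singularValues M i

noncomputable def matrixSpectralNorm {d : ℕ} {n : Type*} [Fintype n]
    (M : Matrix (Fin d) n ℝ) : ℝ :=
  ⨆ i, singularValues M i

/-!
The nuclear norm of `M` is `tr √(M Mᴴ)`. For `M = [A B]` we have `M Mᴴ = A Aᴴ + B Bᴴ`, and
`Aᵀ B = 0` makes the two summands annihilate each other. Their square roots then annihilate each
other too, so `√(A Aᴴ + B Bᴴ) = √(A Aᴴ) + √(B Bᴴ)`, and taking traces gives the claim.
-/

open scoped MatrixOrder ComplexOrder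

namespace Matrix

variable {ι 𝕜 : Type*} [Fintype ι] [DecidableEq ι] [RCLike 𝕜]

lemma IsHermitian.trace_cfc {A : Matrix ι ι 𝕜} (hA : A.IsHermitian) (f : ℝ → ℝ) :
    (cfc f A).trace = ∑ i, (f (hA.eigenvalues i) : 𝕜) := by
  rw [hA.cfc_eq, IsHermitian.cfc, Unitary.conjStarAlgAut_apply, trace_mul_cycle,
    (mem_unitaryGroup_iff').mp hA.eigenvectorUnitary.2, one_mul, trace_diagonal]
  rfl

lemma PosSemidef.trace_sqrt {A : Matrix ι ι 𝕜} (hA : A.PosSemidef) :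
    (CFC.sqrt A).trace = ∑ i, (√(hA.1.eigenvalues i) : 𝕜) := by
  rw [CFC.sqrt_eq_real_sqrt A hA.nonneg, cfcₙ_eq_cfc, hA.1.trace_cfc]

lemma sqrt_mul_conjTranspose_sqrt {A : Matrix ι ι 𝕜} (hA : 0 ≤ A) :
    CFC.sqrt A * (CFC.sqrt A)ᴴ = A := by
  rw [(CFC.sqrt_nonneg A).posSemidef.1.eq, CFC.sqrt_mul_sqrt_self A]

/-- Cancel the outer factors of `√A √Aᴴ √B √Bᴴ = 0`, using `X Xᴴ = 0 → X = 0`. -/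
lemma sqrt_mul_sqrt_eq_zero_of_mul_eq_zero {A B : Matrix ι ι 𝕜} (hA : 0 ≤ A) (hB : 0 ≤ B)
    (hAB : A * B = 0) : CFC.sqrt A * CFC.sqrt B = 0 := by
  rwa [← sqrt_mul_conjTranspose_sqrt hA, ← sqrt_mul_conjTranspose_sqrt hB,
    mul_self_mul_conjTranspose_eq_zero, self_mul_conjTranspose_mul_eq_zero,
    (CFC.sqrt_nonneg A).posSemidef.1.eq] at hAB

lemma sqrt_add_of_mul_eq_zero {A B : Matrix ι ι 𝕜} (hA : 0 ≤ A) (hB : 0 ≤ B)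
    (hAB : A * B = 0) : CFC.sqrt (A + B) = CFC.sqrt A + CFC.sqrt B := by
  have hBA : B * A = 0 := by
    simpa [hA.posSemidef.1.eq, hB.posSemidef.1.eq] using congrArg conjTranspose hAB
  refine CFC.sqrt_unique ?_ (add_nonneg (CFC.sqrt_nonneg A) (CFC.sqrt_nonneg B))
  rw [add_mul, mul_add, mul_add, sqrt_mul_sqrt_eq_zero_of_mul_eq_zero hA hB hAB,
    sqrt_mul_sqrt_eq_zero_of_mul_eq_zero hB hA hBA, CFC.sqrt_mul_sqrt_self A,
    CFC.sqrt_mul_sqrt_self B, add_zero, zero_add]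

lemma fromCols_mul_conjTranspose_fromCols {R m n₁ n₂ : Type*} [Semiring R] [Star R]
    [Fintype n₁] [Fintype n₂] (A : Matrix m n₁ R) (B : Matrix m n₂ R) :
    fromCols A B * (fromCols A B)ᴴ = A * Aᴴ + B * Bᴴ := by
  rw [conjTranspose_fromCols_eq_fromRows_conjTranspose, fromCols_mul_fromRows]

end Matrix

lemma nuclearNorm_eq_trace_sqrt {d : ℕ} {n : Type*} [Fintype n] (M : Matrix (Fin d) n ℝ) :
    nuclearNorm M = (CFC.sqrt (M * Mᴴ)).trace := by
  rw [(posSemidef_self_mul_conjTranspose M).trace_sqrt]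
  rfl

theorem nuclearNorm_fromColumns_eq_of_orthogonal {d n m : ℕ}
    (A : Matrix (Fin d) (Fin n) ℝ) (B : Matrix (Fin d) (Fin m) ℝ)
    (h : Aᵀ * B = 0) :
    nuclearNorm (Matrix.fromCols A B) = nuclearNorm A + nuclearNorm B := by
  have hAB : (A * Aᴴ) * (B * Bᴴ) = 0 := by
    rw [self_mul_conjTranspose_mul_eq_zero, mul_self_mul_conjTranspose_eq_zero,
      conjTranspose_eq_transpose_of_trivial, h]
  rw [nuclearNorm_eq_trace_sqrt, nuclearNorm_eq_trace_sqrt, nuclearNorm_eq_trace_sqrt,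
    fromCols_mul_conjTranspose_fromCols, sqrt_add_of_mul_eq_zero
      (posSemidef_self_mul_conjTranspose A).nonneg (posSemidef_self_mul_conjTranspose B).nonneg hAB,
    trace_add]
end

section
/- For matrices A and B with the same number of rows, the Euclidean norm of the vector (‖A‖_*, ‖B‖_*) is at most the nuclear norm of the concatenation: √(‖A‖_*² + ‖B‖_*²) ≤ ‖[A, B]‖_*. -/
open Matrix

noncomputable def spectralNorm' {d : ℕ} {n : Type*} [Fintype n]
    (M : Matrix (Fin d) n ℝ) : ℝ :=
  ⨆ i, singularValues M i

/-!
Put `P = A Aᴴ` and `Q = B Bᴴ`, so that `[A, B] [A, B]ᴴ = P + Q`, and let `U` be an orthonormal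
eigenbasis of `P + Q`. Then the eigenvalues of `P + Q` are `p i + q i`, where `p` and `q` are the
diagonals of `Uᴴ P U` and `Uᴴ Q U`. The diagonal of `Uᴴ P U` is the image of the eigenvalues of
`P` under the doubly stochastic matrix `|Uᴴ V|²` (with `V` an eigenbasis of `P`), so concavity of
the square root gives `‖A‖_* ≤ ∑ √(p i)`, and likewise `‖B‖_* ≤ ∑ √(q i)`. Finally the triangle
inequality for the vectors `(√(p i), √(q i))` of the plane gives
`√((∑ √(p i))² + (∑ √(q i))²) ≤ ∑ √(p i + q i) = ‖[A, B]‖_*`.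
-/

theorem Real.sqrt_sq_sum_add_sq_sum_le {ι : Type*} (s : Finset ι) (x y : ι → ℝ) :
    √((∑ i ∈ s, x i) ^ 2 + (∑ i ∈ s, y i) ^ 2) ≤ ∑ i ∈ s, √(x i ^ 2 + y i ^ 2) := by
  simp_rw [← Complex.norm_add_mul_I]
  push_cast
  rw [Finset.sum_mul, ← Finset.sum_add_distrib]
  exact norm_sum_le _ _

section DoublyStochastic

variable {ι : Type*} [Fintype ι] [DecidableEq ι]

theorem ConcaveOn.sum_le_sum_map_mulVec {s : Set ℝ} {f : ℝ → ℝ} (hf : ConcaveOn ℝ s f)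
    {S : Matrix ι ι ℝ} (hS : S ∈ doublyStochastic ℝ ι) {x : ι → ℝ} (hx : ∀ j, x j ∈ s) :
    ∑ j, f (x j) ≤ ∑ i, f ((S *ᵥ x) i) :=
  calc ∑ j, f (x j) = ∑ i, ∑ j, S i j * f (x j) := by
        simp [Finset.sum_comm (γ := ι), ← Finset.sum_mul, sum_col_of_mem_doublyStochastic hS]
    _ ≤ ∑ i, f ((S *ᵥ x) i) := Finset.sum_le_sum fun i _ =>
        hf.le_map_sum (fun j _ => hS.1 i j) (sum_row_of_mem_doublyStochastic hS i) fun j _ => hx j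

theorem Matrix.hadamard_self_mem_doublyStochastic {W : Matrix ι ι ℝ}
    (hW : W ∈ unitaryGroup ι ℝ) : W ⊙ W ∈ doublyStochastic ℝ ι := by
  refine mem_doublyStochastic_iff_sum.2
    ⟨fun i j => mul_self_nonneg (W i j), fun i => ?_, fun j => ?_⟩
  · simpa [mul_apply, one_apply] using congr_fun₂ (mem_unitaryGroup_iff.1 hW) i i
  · simpa [mul_apply, one_apply] using congr_fun₂ (mem_unitaryGroup_iff'.1 hW) j j

end DoublyStochastic

namespace Matrix.IsHermitian

variable {ι : Type*} [Fintype ι] [DecidableEq ι] {P : Matrix ι ι ℝ}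

theorem eigenvalues_eq_diag_star_mul_mul (hP : P.IsHermitian) :
    hP.eigenvalues =
      (star (hP.eigenvectorUnitary : Matrix ι ι ℝ) * P * hP.eigenvectorUnitary).diag := by
  have hdiag := hP.conjStarAlgAut_star_eigenvectorUnitary
  rw [Unitary.conjStarAlgAut_star_apply] at hdiag
  ext i
  simp [hdiag]

theorem diag_star_mul_mul (hP : P.IsHermitian) (U : Matrix ι ι ℝ) :
    (star U * P * U).diag =
      ((star U * (hP.eigenvectorUnitary : Matrix ι ι ℝ)) ⊙
        (star U * (hP.eigenvectorUnitary : Matrix ι ι ℝ))) *ᵥ hP.eigenvalues := by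
  set W := star U * (hP.eigenvectorUnitary : Matrix ι ι ℝ)
  have hconj : star U * P * U = W * diagonal hP.eigenvalues * Wᴴ := by
    conv_lhs => rw [hP.spectral_theorem]
    simp only [W, Unitary.conjStarAlgAut_apply, star_eq_conjTranspose, conjTranspose_mul,
      conjTranspose_conjTranspose, Matrix.mul_assoc, Function.comp_def, RCLike.ofReal_real_eq_id,
      id]
  ext i
  rw [hconj, diag_apply, mul_apply]
  simp only [mul_diagonal, conjTranspose_apply, star_trivial, mulVec, dotProduct, hadamard_apply]
  exact Finset.sum_congr rfl fun j _ => by ring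

theorem sum_map_eigenvalues_le_sum_map_diag (hP : P.IsHermitian) {U : Matrix ι ι ℝ}
    (hU : U ∈ unitaryGroup ι ℝ) {s : Set ℝ} {f : ℝ → ℝ} (hf : ConcaveOn ℝ s f)
    (hs : ∀ j, hP.eigenvalues j ∈ s) :
    ∑ j, f (hP.eigenvalues j) ≤ ∑ i, f ((star U * P * U) i i) := by
  have hS := hadamard_self_mem_doublyStochastic
    (mul_mem (Unitary.star_mem hU) hP.eigenvectorUnitary.2)
  have hmajor := hf.sum_le_sum_map_mulVec hS hs
  rwa [← diag_star_mul_mul] at hmajor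

end Matrix.IsHermitian

theorem nuclearNorm_nonneg {d : ℕ} {ι : Type*} [Fintype ι] (M : Matrix (Fin d) ι ℝ) :
    0 ≤ nuclearNorm M :=
  Finset.sum_nonneg fun _ _ => Real.sqrt_nonneg _

theorem nuclearNorm_eq_sum_sqrt_eigenvalues {d : ℕ} {ι : Type*} [Fintype ι]
    {M : Matrix (Fin d) ι ℝ} {S : Matrix (Fin d) (Fin d) ℝ} (hS : S.IsHermitian)
    (hMS : M * Mᴴ = S) : nuclearNorm M = ∑ i, √(hS.eigenvalues i) := by
  subst hMS
  rfl

theorem nuclearNorm_le_sum_sqrt_diag {d : ℕ} {ι : Type*} [Fintype ι] (M : Matrix (Fin d) ι ℝ)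
    {U : Matrix (Fin d) (Fin d) ℝ} (hU : U ∈ unitaryGroup (Fin d) ℝ) :
    nuclearNorm M ≤ ∑ i, √((star U * (M * Mᴴ) * U) i i) :=
  (isHermitian_mul_conjTranspose_self M).sum_map_eigenvalues_le_sum_map_diag hU
    Real.strictConcaveOn_sqrt.concaveOn (posSemidef_self_mul_conjTranspose M).eigenvalues_nonneg

theorem sqrt_sq_add_sq_le_nuclearNorm_fromColumns {d n m : ℕ}
    (A : Matrix (Fin d) (Fin n) ℝ) (B : Matrix (Fin d) (Fin m) ℝ) :
    Real.sqrt ((nuclearNorm A) ^ 2 + (nuclearNorm B) ^ 2)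
      ≤ nuclearNorm (Matrix.fromCols A B) := by
  have hP := posSemidef_self_mul_conjTranspose A
  have hQ := posSemidef_self_mul_conjTranspose B
  have hPQ : (A * Aᴴ + B * Bᴴ).IsHermitian := (hP.add hQ).1
  set U : Matrix (Fin d) (Fin d) ℝ := ↑hPQ.eigenvectorUnitary
  have hU : U ∈ unitaryGroup (Fin d) ℝ := hPQ.eigenvectorUnitary.2
  set p := fun i => (star U * (A * Aᴴ) * U) i i
  set q := fun i => (star U * (B * Bᴴ) * U) i i
  have hp : ∀ i, 0 ≤ p i := fun i => (hP.conjTranspose_mul_mul_same U).diag_nonneg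
  have hq : ∀ i, 0 ≤ q i := fun i => (hQ.conjTranspose_mul_mul_same U).diag_nonneg
  have hM : nuclearNorm (fromCols A B) = ∑ i, √(p i + q i) := by
    rw [nuclearNorm_eq_sum_sqrt_eigenvalues hPQ (by
      rw [conjTranspose_fromCols_eq_fromRows_conjTranspose, fromCols_mul_fromRows])]
    refine Finset.sum_congr rfl fun i _ => ?_
    rw [hPQ.eigenvalues_eq_diag_star_mul_mul, diag_apply, Matrix.mul_add, Matrix.add_mul,
      Matrix.add_apply]
  calc √(nuclearNorm A ^ 2 + nuclearNorm B ^ 2)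
      ≤ √((∑ i, √(p i)) ^ 2 + (∑ i, √(q i)) ^ 2) := by
        gcongr
        exacts [nuclearNorm_nonneg A, nuclearNorm_le_sum_sqrt_diag A hU,
          nuclearNorm_nonneg B, nuclearNorm_le_sum_sqrt_diag B hU]
    _ ≤ ∑ i, √(√(p i) ^ 2 + √(q i) ^ 2) := Real.sqrt_sq_sum_add_sq_sum_le _ _ _
    _ = nuclearNorm (fromCols A B) := by
        simp only [hM, Real.sq_sqrt (hp _), Real.sq_sqrt (hq _)]
end

section
/- If A ∈ ℝ^{d×n} and B ∈ ℝ^{d×m} have the same column space, with singular value decompositions A = U Σ V₁ᵀ and B = U Λ V₂ᵀ sharing the same left singular vectors U (σᵢ, λᵢ the singular values), then the nuclear norm of the concatenation is ‖[A, B]‖_* = Σᵢ √(σᵢ² + λᵢ²). -/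
/-!
The Gram matrix of `[A, B]` is `A Aᵀ + B Bᵀ = U diag(σᵢ² + λᵢ²) Uᵀ`, because the orthonormal
right factors cancel. Conjugation by the orthogonal `U` preserves the characteristic polynomial,
so the eigenvalues of the Gram matrix are the `σᵢ² + λᵢ²` counted with multiplicity, and the
singular values of `[A, B]` are their square roots.
-/

open Matrix Polynomial

namespace Matrix

variable {ι κ R : Type*} [Fintype ι] [DecidableEq ι] [Fintype κ] [CommRing R]

theorem charpoly_mul_mul_transpose_of_transpose_mul_self_eq_one {U : Matrix ι ι R}
    (hU : Uᵀ * U = 1) (D : Matrix ι ι R) : (U * D * Uᵀ).charpoly = D.charpoly := by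
  rw [charpoly_mul_comm, ← Matrix.mul_assoc, hU, Matrix.one_mul]

theorem mul_diagonal_mul_transpose_mul_transpose_self (U : Matrix ι ι R) {V : Matrix κ ι R}
    (hV : Vᵀ * V = 1) (σ : ι → R) :
    U * diagonal σ * Vᵀ * (U * diagonal σ * Vᵀ)ᵀ = U * diagonal (fun i => σ i ^ 2) * Uᵀ := by
  simp only [transpose_mul, transpose_transpose, diagonal_transpose, Matrix.mul_assoc]
  rw [← Matrix.mul_assoc Vᵀ, hV, Matrix.one_mul, ← Matrix.mul_assoc (diagonal σ),
    diagonal_mul_diagonal]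
  simp only [sq]

theorem IsHermitian.eigenvalues_multiset_eq_of_eq_mul_diagonal_mul_transpose
    {M U : Matrix ι ι ℝ} (hM : M.IsHermitian) (hU : Uᵀ * U = 1) {μ : ι → ℝ}
    (hMU : M = U * diagonal μ * Uᵀ) :
    Finset.univ.val.map hM.eigenvalues = Finset.univ.val.map μ := by
  have hchar : M.charpoly = ((Finset.univ.val.map μ).map fun a => X - C a).prod := by
    rw [hMU, charpoly_mul_mul_transpose_of_transpose_mul_self_eq_one hU, charpoly_diagonal,
      Multiset.map_map, Finset.prod_map_val]
    rfl
  have hroots := hM.roots_charpoly_eq_eigenvalues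
  rw [hchar, roots_multiset_prod_X_sub_C] at hroots
  simpa using hroots.symm

theorem IsHermitian.sum_comp_eigenvalues_of_eq_mul_diagonal_mul_transpose {M U : Matrix ι ι ℝ}
    (hM : M.IsHermitian) (hU : Uᵀ * U = 1) {μ : ι → ℝ} (hMU : M = U * diagonal μ * Uᵀ)
    (g : ℝ → ℝ) : ∑ i, g (hM.eigenvalues i) = ∑ i, g (μ i) := by
  simpa only [Multiset.map_map, Finset.sum_map_val, Function.comp_apply] using
    congr_arg (fun s => (s.map g).sum)
      (hM.eigenvalues_multiset_eq_of_eq_mul_diagonal_mul_transpose hU hMU)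

end Matrix

theorem nuclearNorm_fromColumns_of_shared_left_singular_vectors_general
    {d n m : ℕ}
    (U : Matrix (Fin d) (Fin d) ℝ) (hU : Uᵀ * U = 1)
    (V₁ : Matrix (Fin n) (Fin d) ℝ) (hV₁ : V₁ᵀ * V₁ = 1)
    (V₂ : Matrix (Fin m) (Fin d) ℝ) (hV₂ : V₂ᵀ * V₂ = 1)
    (σ lam : Fin d → ℝ)
    (A : Matrix (Fin d) (Fin n) ℝ) (B : Matrix (Fin d) (Fin m) ℝ)
    (hA : A = U * Matrix.diagonal σ * V₁ᵀ)
    (hB : B = U * Matrix.diagonal lam * V₂ᵀ) :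
    nuclearNorm (Matrix.fromCols A B)
      = ∑ i, Real.sqrt (σ i ^ 2 + lam i ^ 2) := by
  have hGram : fromCols A B * (fromCols A B)ᴴ
      = U * diagonal (fun i => σ i ^ 2 + lam i ^ 2) * Uᵀ := by
    rw [conjTranspose_eq_transpose_of_trivial, transpose_fromCols, fromCols_mul_fromRows, hA, hB,
      mul_diagonal_mul_transpose_mul_transpose_self U hV₁,
      mul_diagonal_mul_transpose_mul_transpose_self U hV₂, ← Matrix.add_mul, ← Matrix.mul_add,
      diagonal_add]
  exact (isHermitian_mul_conjTranspose_self _).sum_comp_eigenvalues_of_eq_mul_diagonal_mul_transpose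
    hU hGram Real.sqrt

theorem nuclearNorm_fromColumns_of_shared_left_singular_vectors
    {d n m : ℕ}
    (U : Matrix (Fin d) (Fin d) ℝ) (hU : Uᵀ * U = 1)
    (V₁ : Matrix (Fin n) (Fin d) ℝ) (hV₁ : V₁ᵀ * V₁ = 1)
    (V₂ : Matrix (Fin m) (Fin d) ℝ) (hV₂ : V₂ᵀ * V₂ = 1)
    (σ lam : Fin d → ℝ) (hσ : ∀ i, 0 ≤ σ i) (hlam : ∀ i, 0 ≤ lam i)
    (A : Matrix (Fin d) (Fin n) ℝ) (B : Matrix (Fin d) (Fin m) ℝ)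
    (hA : A = U * Matrix.diagonal σ * V₁ᵀ)
    (hB : B = U * Matrix.diagonal lam * V₂ᵀ) :
    nuclearNorm (Matrix.fromCols A B)
      = ∑ i, Real.sqrt (σ i ^ 2 + lam i ^ 2) :=
  nuclearNorm_fromColumns_of_shared_left_singular_vectors_general U hU V₁ hV₁ V₂ hV₂ σ lam A B hA hB
end

section
/- If A ∈ ℝ^{d×n} and B ∈ ℝ^{d×m} have the same column spaces, all singular values of A equal α and all singular values of B equal α (so ‖A‖_* = ‖B‖_* = α·d and ‖A‖_σ = ‖B‖_σ = α), then ‖A‖_* + ‖B‖_* − ‖[A, B]‖_* = (2 − √2)·α·d. -/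
/-! Orthogonality of `U` and orthonormality of the columns of `V₁`, `V₂` give
`A Aᵀ = B Bᵀ = α² I`, hence `[A, B] [A, B]ᵀ = A Aᵀ + B Bᵀ = 2α² I`. A `d`-row matrix `M` with
`M Mᵀ = c I` has all `d` singular values equal to `√c`, so the three nuclear norms are
`dα`, `dα` and `√2 dα`. -/

open Matrix

lemma Matrix.IsHermitian.eigenvalues_eq_of_eq_smul_one {𝕜 n : Type*} [RCLike 𝕜] [Fintype n]
    [DecidableEq n] {A : Matrix n n 𝕜} (hA : A.IsHermitian) {c : ℝ} (h : A = c • 1) (i : n) :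
    hA.eigenvalues i = c := by
  have : Nonempty n := ⟨i⟩
  have hspec : spectrum ℝ A = {c} := by
    rw [h, ← Algebra.algebraMap_eq_smul_one, spectrum.scalar_eq]
  simpa [hspec] using hA.eigenvalues_mem_spectrum_real i

lemma Matrix.fromCols_mul_conjTranspose_fromCols_s11 {R m n₁ n₂ : Type*} [Fintype n₁] [Fintype n₂]
    [Semiring R] [StarRing R] (A : Matrix m n₁ R) (B : Matrix m n₂ R) :
    fromCols A B * (fromCols A B)ᴴ = A * Aᴴ + B * Bᴴ := by
  rw [conjTranspose_fromCols_eq_fromRows_conjTranspose, fromCols_mul_fromRows]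

lemma mul_diagonal_const_mul_transpose_mul_conjTranspose_self {ι κ ν : Type*} [Fintype κ]
    [DecidableEq κ] [Fintype ν] [DecidableEq ι] (α : ℝ) {U : Matrix ι κ ℝ} (hU : U * Uᵀ = 1)
    {V : Matrix ν κ ℝ} (hV : Vᵀ * V = 1) :
    (U * diagonal (fun _ : κ => α) * Vᵀ) * (U * diagonal (fun _ : κ => α) * Vᵀ)ᴴ =
      (α ^ 2) • (1 : Matrix ι ι ℝ) := by
  have hUD : U * diagonal (fun _ : κ => α) = α • U := by
    rw [← smul_one_eq_diagonal, Matrix.mul_smul, Matrix.mul_one]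
  rw [hUD, conjTranspose_eq_transpose_of_trivial, transpose_mul, transpose_transpose,
    transpose_smul, Matrix.smul_mul, Matrix.mul_smul, Matrix.smul_mul, Matrix.mul_smul,
    smul_smul, Matrix.mul_assoc, ← Matrix.mul_assoc Vᵀ, hV, Matrix.one_mul, hU, sq]

section

variable {d : ℕ} {n : Type*} [Fintype n] {M : Matrix (Fin d) n ℝ} {c : ℝ}

lemma singularValues_eq_sqrt_of_mul_conjTranspose_self_eq (h : M * Mᴴ = c • 1) (i : Fin d) :
    singularValues M i = √c :=
  congrArg Real.sqrt ((isHermitian_mul_conjTranspose_self M).eigenvalues_eq_of_eq_smul_one h i)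

lemma nuclearNorm_eq_of_mul_conjTranspose_self_eq (h : M * Mᴴ = c • 1) :
    nuclearNorm M = d * √c := by
  simp [nuclearNorm, singularValues_eq_sqrt_of_mul_conjTranspose_self_eq h]

end

theorem nuclearNorm_gap_eq_of_same_column_space_max_norm_general
    {d n m : ℕ} (α : ℝ) (hα : 0 < α)
    (U : Matrix (Fin d) (Fin d) ℝ) (hU : Uᵀ * U = 1)
    (V₁ : Matrix (Fin n) (Fin d) ℝ) (hV₁ : V₁ᵀ * V₁ = 1)
    (V₂ : Matrix (Fin m) (Fin d) ℝ) (hV₂ : V₂ᵀ * V₂ = 1)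
    (A : Matrix (Fin d) (Fin n) ℝ) (B : Matrix (Fin d) (Fin m) ℝ)
    (hA : A = U * Matrix.diagonal (fun _ => α) * V₁ᵀ)
    (hB : B = U * Matrix.diagonal (fun _ => α) * V₂ᵀ) :
    nuclearNorm A + nuclearNorm B - nuclearNorm (Matrix.fromCols A B)
      = (2 - Real.sqrt 2) * α * d := by
  have hUUt : U * Uᵀ = 1 := mul_eq_one_comm.mp hU
  have hAA : A * Aᴴ = (α ^ 2) • 1 :=
    hA ▸ mul_diagonal_const_mul_transpose_mul_conjTranspose_self α hUUt hV₁
  have hBB : B * Bᴴ = (α ^ 2) • 1 :=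
    hB ▸ mul_diagonal_const_mul_transpose_mul_conjTranspose_self α hUUt hV₂
  have hAB : fromCols A B * (fromCols A B)ᴴ = (2 * α ^ 2) • 1 := by
    rw [fromCols_mul_conjTranspose_fromCols_s11, hAA, hBB, ← add_smul, two_mul]
  rw [nuclearNorm_eq_of_mul_conjTranspose_self_eq hAA,
    nuclearNorm_eq_of_mul_conjTranspose_self_eq hBB,
    nuclearNorm_eq_of_mul_conjTranspose_self_eq hAB, Real.sqrt_mul zero_le_two,
    Real.sqrt_sq hα.le]
  ring

theorem nuclearNorm_gap_eq_of_same_column_space_max_norm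
    {d n m : ℕ} (α : ℝ) (hα : 0 < α) (hdn : d ≤ n) (hdm : d ≤ m)
    (U : Matrix (Fin d) (Fin d) ℝ) (hU : Uᵀ * U = 1)
    (V₁ : Matrix (Fin n) (Fin d) ℝ) (hV₁ : V₁ᵀ * V₁ = 1)
    (V₂ : Matrix (Fin m) (Fin d) ℝ) (hV₂ : V₂ᵀ * V₂ = 1)
    (A : Matrix (Fin d) (Fin n) ℝ) (B : Matrix (Fin d) (Fin m) ℝ)
    (hA : A = U * Matrix.diagonal (fun _ => α) * V₁ᵀ)
    (hB : B = U * Matrix.diagonal (fun _ => α) * V₂ᵀ) :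
    nuclearNorm A + nuclearNorm B - nuclearNorm (Matrix.fromCols A B)
      = (2 - Real.sqrt 2) * α * d :=
  nuclearNorm_gap_eq_of_same_column_space_max_norm_general α hα U hU V₁ hV₁ V₂ hV₂ A B hA hB
end
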